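/- arXiv:1506.05391 — 6 statements merged into one kernel-verified Lean document; each statement's English description precedes it below -/
import Mathlib

section
/- For every real number p ≥ 2 and all real numbers u, v, we have ||u|^{2/p}·sign(u) − |v|^{2/p}·sign(v)|^p ≤ 2^{p−2}·|u − v|^2. -/
open Real NNReal

private lemma aux_sub {a x y : ℝ} (ha0 : 0 < a) (ha1 : a ≤ 1) (hy : 0 ≤ y) (hxy : y ≤ x) :
    x ^ a - y ^ a ≤ (x - y) ^ a := by
  have hd : 0 ≤ x - y := sub_nonneg.2 hxy
  have h := NNReal.rpow_add_le_add_rpow (Real.toNNReal y) (Real.toNNReal (x - y)) ha0.le ha1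
  rw [← Real.toNNReal_add hy hd] at h
  have h' := NNReal.coe_le_coe.2 h
  simp only [NNReal.coe_rpow, NNReal.coe_add, Real.coe_toNNReal _ hy,
    Real.coe_toNNReal _ hd, Real.coe_toNNReal _ (hy.trans hxy)] at h'
  have : y + (x - y) = x := by ring
  rw [this, Real.coe_toNNReal x (hy.trans hxy)] at h'
  linarith

private lemma aux_L2 {a x y : ℝ} (ha0 : 0 < a) (ha1 : a ≤ 1) (hx : 0 ≤ x) (hy : 0 ≤ y) :
    x ^ a + y ^ a ≤ 2 ^ (1 - a) * (x + y) ^ a := by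
  have hp : 1 ≤ 1 / a := by rw [le_div_iff₀ ha0]; linarith
  have h := NNReal.rpow_add_le_mul_rpow_add_rpow (Real.toNNReal x ^ a) (Real.toNNReal y ^ a) hp
  have ha : (1 : ℝ) / a * a = 1 := by field_simp
  have ha' : a * ((1 : ℝ) / a) = 1 := by field_simp
  rw [← NNReal.rpow_mul, ← NNReal.rpow_mul, ha', NNReal.rpow_one, NNReal.rpow_one] at h
  have h2 := NNReal.rpow_le_rpow h ha0.le
  rw [← NNReal.rpow_mul, ha, NNReal.rpow_one, NNReal.mul_rpow, ← NNReal.rpow_mul] at h2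
  have he : (1 / a - 1) * a = 1 - a := by field_simp
  rw [he] at h2
  have h' := NNReal.coe_le_coe.2 h2
  simp only [NNReal.coe_mul, NNReal.coe_rpow, NNReal.coe_add, NNReal.coe_ofNat,
    Real.coe_toNNReal _ hx, Real.coe_toNNReal _ hy] at h'
  exact h'

/-- For every real `p ≥ 2` and all real `u, v`,
`||u|^{2/p}·sign(u) − |v|^{2/p}·sign(v)|^p ≤ 2^{p−2}·|u − v|^2`. -/
theorem stmt0 (p u v : ℝ) (hp : 2 ≤ p) :
    |(|u| ^ (2 / p) * Real.sign u - |v| ^ (2 / p) * Real.sign v)| ^ p ≤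
      (2 : ℝ) ^ (p - 2) * |u - v| ^ (2 : ℝ) := by
  have hp0 : 0 < p := lt_of_lt_of_le two_pos hp
  have hpne : p ≠ 0 := ne_of_gt hp0
  set a : ℝ := 2 / p with ha_def
  have ha0 : 0 < a := by positivity
  have ha1 : a ≤ 1 := by rw [ha_def, div_le_one hp0]; linarith
  -- f w = |w|^a * sign w
  have fval : ∀ w : ℝ, 0 ≤ w → |w| ^ a * Real.sign w = w ^ a := by
    intro w hw
    rcases hw.eq_or_lt with rfl | h
    · simp [Real.sign_zero, Real.zero_rpow ha0.ne']
    · rw [Real.sign_of_pos h, abs_of_pos h, mul_one]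
  have fneg : ∀ w : ℝ, |w| ^ a * Real.sign w = -(|(-w)| ^ a * Real.sign (-w)) := by
    intro w; rw [abs_neg, Real.sign_neg]; ring
  have h21 : (1 : ℝ) ≤ 2 ^ (1 - a) := by
    have := Real.rpow_le_rpow_of_exponent_le one_le_two (by linarith : (0:ℝ) ≤ 1 - a)
    rwa [Real.rpow_zero] at this
  have key1 : ∀ x y : ℝ, 0 ≤ x → 0 ≤ y → |x ^ a - y ^ a| ≤ 2 ^ (1 - a) * |x - y| ^ a := by
    have base : ∀ x y : ℝ, 0 ≤ y → y ≤ x → |x ^ a - y ^ a| ≤ |x - y| ^ a := by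
      intro x y hy hxy
      rw [abs_of_nonneg (sub_nonneg.2 (Real.rpow_le_rpow hy hxy ha0.le)),
        abs_of_nonneg (sub_nonneg.2 hxy)]
      exact aux_sub ha0 ha1 hy hxy
    intro x y hx hy
    have hb : |x ^ a - y ^ a| ≤ |x - y| ^ a := by
      rcases le_total y x with h | h
      · exact base x y hy h
      · rw [abs_sub_comm, abs_sub_comm x y]; exact base y x hx h
    calc |x ^ a - y ^ a| ≤ |x - y| ^ a := hb
      _ ≤ 2 ^ (1 - a) * |x - y| ^ a :=
        le_mul_of_one_le_left (Real.rpow_nonneg (abs_nonneg _) _) h21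
  have key2 : ∀ x y : ℝ, 0 ≤ x → y ≤ 0 →
      |(|x| ^ a * Real.sign x - |y| ^ a * Real.sign y)| ≤ 2 ^ (1 - a) * |x - y| ^ a := by
    intro x y hx hy
    have hny : 0 ≤ -y := by linarith
    rw [fval x hx, fneg y, fval (-y) hny, sub_neg_eq_add]
    have hnn : 0 ≤ x ^ a + (-y) ^ a :=
      add_nonneg (Real.rpow_nonneg hx _) (Real.rpow_nonneg hny _)
    rw [abs_of_nonneg hnn, abs_of_nonneg (by linarith : 0 ≤ x - y),
      show x - y = x + -y from by ring]
    exact aux_L2 ha0 ha1 hx hny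
  have key : |(|u| ^ a * Real.sign u - |v| ^ a * Real.sign v)| ≤ 2 ^ (1 - a) * |u - v| ^ a := by
    rcases le_total 0 u with hu | hu <;> rcases le_total 0 v with hv | hv
    · rw [fval u hu, fval v hv]; exact key1 u v hu hv
    · exact key2 u v hu hv
    · rw [abs_sub_comm, abs_sub_comm u v]; exact key2 v u hv hu
    · rw [fneg u, fneg v, show -(|(-u)| ^ a * Real.sign (-u)) - -(|(-v)| ^ a * Real.sign (-v))
          = -((|(-u)| ^ a * Real.sign (-u)) - (|(-v)| ^ a * Real.sign (-v))) from by ring,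
        abs_neg, fval (-u) (by linarith), fval (-v) (by linarith),
        show |u - v| = |(-u) - (-v)| from by rw [abs_sub_comm]; congr 1; ring]
      exact key1 (-u) (-v) (by linarith) (by linarith)
  have h2 := Real.rpow_le_rpow (abs_nonneg _) key (by linarith : (0:ℝ) ≤ p)
  calc |(|u| ^ a * Real.sign u - |v| ^ a * Real.sign v)| ^ p
      ≤ (2 ^ (1 - a) * |u - v| ^ a) ^ p := h2
    _ = (2:ℝ) ^ (p - 2) * |u - v| ^ (2:ℝ) := by
        rw [Real.mul_rpow (Real.rpow_nonneg (by norm_num) _) (Real.rpow_nonneg (abs_nonneg _) _),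
          ← Real.rpow_mul (by norm_num : (0:ℝ) ≤ 2), ← Real.rpow_mul (abs_nonneg _),
          show (1 - a) * p = p - 2 from by rw [ha_def]; field_simp,
          show a * p = 2 from by rw [ha_def]; field_simp]
end

section
/- For every real p ≥ 2 and all real u, v, we have ||u|^{2/p}·sign(u) − |v|^{2/p}·sign(v)| ≤ 2^{1−2/p}·|u−v|^{2/p}. -/
open Real

/-- Subadditivity of `x ↦ x^α` on nonneg reals for `α ≤ 1`. -/
lemma aux_add_rpow_le {α a b : ℝ} (ha : 0 ≤ a) (hb : 0 ≤ b) (hα0 : 0 ≤ α) (hα1 : α ≤ 1) :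
    (a + b) ^ α ≤ a ^ α + b ^ α := by
  have h := NNReal.rpow_add_le_add_rpow a.toNNReal b.toNNReal hα0 hα1
  have := (NNReal.coe_le_coe).2 h
  push_cast [NNReal.coe_rpow, Real.coe_toNNReal a ha, Real.coe_toNNReal b hb,
    ← Real.toNNReal_add ha hb, Real.coe_toNNReal _ (add_nonneg ha hb)] at this
  exact this

lemma aux_sub_s1 (α a b : ℝ) (hα0 : 0 ≤ α) (hα1 : α ≤ 1) (hb : 0 ≤ b) (hab : b ≤ a) :
    a ^ α - b ^ α ≤ (a - b) ^ α := by
  have h := aux_add_rpow_le hb (sub_nonneg.2 hab) hα0 hα1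
  rw [add_sub_cancel] at h
  linarith

/-- Concavity bound: `a^α + b^α ≤ 2^(1-α) (a+b)^α`. -/
lemma aux_concave (α a b : ℝ) (hα0 : 0 ≤ α) (hα1 : α ≤ 1) (ha : 0 ≤ a) (hb : 0 ≤ b) :
    a ^ α + b ^ α ≤ 2 ^ (1 - α) * (a + b) ^ α := by
  have hc := (Real.concaveOn_rpow hα0 hα1).2 (Set.mem_Ici.2 ha) (Set.mem_Ici.2 hb)
      (by norm_num : (0:ℝ) ≤ (1/2 : ℝ)) (by norm_num : (0:ℝ) ≤ (1/2 : ℝ)) (by norm_num)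
  simp only [smul_eq_mul] at hc
  have h2 : ((1:ℝ)/2) * a + (1/2) * b = (a + b) / 2 := by ring
  rw [h2] at hc
  have hdiv : ((a + b) / 2) ^ α = (a + b) ^ α / 2 ^ α :=
    Real.div_rpow (add_nonneg ha hb) (by norm_num : (0:ℝ) ≤ 2) α
  rw [hdiv] at hc
  have h2α : (0:ℝ) < 2 ^ α := Real.rpow_pos_of_pos (by norm_num) α
  have key : 2 ^ (1 - α) * (a + b) ^ α = 2 * ((a + b) ^ α / 2 ^ α) := by
    rw [Real.rpow_sub (by norm_num : (0:ℝ) < 2), Real.rpow_one]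
    field_simp
  rw [key]
  linarith

/-- Mazur map scalar function equals `u^α` for `u ≥ 0`. -/
lemma aux_f_nonneg (α u : ℝ) (hα0 : 0 < α) (hu : 0 ≤ u) :
    |u| ^ α * Real.sign u = u ^ α := by
  rcases eq_or_lt_of_le hu with h | h
  · simp [← h, Real.zero_rpow hα0.ne']
  · rw [Real.sign_of_pos h, abs_of_pos h, mul_one]

lemma aux_f_nonpos (α u : ℝ) (hα0 : 0 < α) (hu : u ≤ 0) :
    |u| ^ α * Real.sign u = -((-u) ^ α) := by
  rcases eq_or_lt_of_le hu with h | h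
  · simp [h, Real.zero_rpow hα0.ne']
  · rw [Real.sign_of_neg h, abs_of_neg h, mul_neg_one]

lemma aux_case1 {α a b : ℝ} (hα0 : 0 < α) (hα1 : α ≤ 1) (ha : 0 ≤ a) (hb : 0 ≤ b) :
    |a ^ α - b ^ α| ≤ 2 ^ (1 - α) * |a - b| ^ α := by
  have h2α : (1:ℝ) ≤ 2 ^ (1 - α) := Real.one_le_rpow (by norm_num) (by linarith)
  wlog hab : b ≤ a with H
  · rw [abs_sub_comm, abs_sub_comm a b]
    exact H hα0 hα1 hb ha h2α (le_of_not_ge hab)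
  have h1 : b ^ α ≤ a ^ α := Real.rpow_le_rpow hb hab hα0.le
  rw [abs_of_nonneg (sub_nonneg.2 h1), abs_of_nonneg (sub_nonneg.2 hab)]
  calc a ^ α - b ^ α ≤ (a - b) ^ α := aux_sub_s1 α a b hα0.le hα1 hb hab
    _ ≤ 2 ^ (1 - α) * (a - b) ^ α :=
      le_mul_of_one_le_left (Real.rpow_nonneg (sub_nonneg.2 hab) α) h2α

/-- For every real `p ≥ 2` and all real `u, v`,
`||u|^{2/p}·sign(u) − |v|^{2/p}·sign(v)| ≤ 2^{1−2/p}·|u−v|^{2/p}`. -/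
theorem stmt1 (p u v : ℝ) (hp : 2 ≤ p) :
    |(|u| ^ (2 / p) * Real.sign u - |v| ^ (2 / p) * Real.sign v)| ≤
      (2 : ℝ) ^ (1 - 2 / p) * |u - v| ^ (2 / p) := by
  set α := 2 / p with hα
  have hppos : (0:ℝ) < p := lt_of_lt_of_le (by norm_num) hp
  have hα0 : 0 < α := div_pos (by norm_num) hppos
  have hα1 : α ≤ 1 := by
    rw [hα, div_le_one hppos]; exact hp
  rcases le_total 0 u with hu | hu <;> rcases le_total 0 v with hv | hv
  · rw [aux_f_nonneg α u hα0 hu, aux_f_nonneg α v hα0 hv]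
    exact aux_case1 hα0 hα1 hu hv
  · rw [aux_f_nonneg α u hα0 hu, aux_f_nonpos α v hα0 hv, sub_neg_eq_add]
    have hnv : 0 ≤ -v := neg_nonneg.2 hv
    have habs : |u - v| = u + (-v) := by
      rw [abs_of_nonneg (by linarith)]; ring
    rw [habs, abs_of_nonneg (add_nonneg (Real.rpow_nonneg hu α) (Real.rpow_nonneg hnv α))]
    exact aux_concave α u (-v) hα0.le hα1 hu hnv
  · rw [aux_f_nonpos α u hα0 hu, aux_f_nonneg α v hα0 hv]
    have hnu : 0 ≤ -u := neg_nonneg.2 hu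
    have habs : |u - v| = (-u) + v := by
      rw [abs_of_nonpos (by linarith)]; ring
    have hL : |-(-u) ^ α - v ^ α| = (-u) ^ α + v ^ α := by
      rw [abs_of_nonpos (by nlinarith [Real.rpow_nonneg hnu α, Real.rpow_nonneg hv α] : -(-u) ^ α - v ^ α ≤ 0)]; ring
    rw [habs, hL]
    exact aux_concave α (-u) v hα0.le hα1 hnu hv
  · rw [aux_f_nonpos α u hα0 hu, aux_f_nonpos α v hα0 hv]
    have hnu : 0 ≤ -u := neg_nonneg.2 hu
    have hnv : 0 ≤ -v := neg_nonneg.2 hv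
    have hL : |-(-u) ^ α - -(-v) ^ α| = |(-u) ^ α - (-v) ^ α| := by
      rw [← abs_neg]; ring_nf
    have habs : |u - v| = |(-u) - (-v)| := by
      rw [abs_sub_comm]; ring_nf
    rw [hL, habs]
    exact aux_case1 hα0 hα1 hnu hnv
end

section
/- For every real p ≥ 2 and every x, y ∈ ℓ₂, the Mazur map M_p satisfies ‖M_p(x) − M_p(y)‖_p ≤ 2^{1−2/p}·‖x − y‖₂^{2/p} ≤ 2·‖x − y‖₂^{2/p}. -/
lemma aux_add_nn {θ : ℝ} (h0 : 0 < θ) (h1 : θ ≤ 1) (x y : NNReal) :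
    x ^ θ + y ^ θ ≤ 2 ^ (1 - θ) * (x + y) ^ θ := by
  have hq : 1 ≤ 1 / θ := by rw [le_div_iff₀ h0]; linarith
  have h := NNReal.rpow_add_le_mul_rpow_add_rpow (x ^ θ) (y ^ θ) hq
  rw [← NNReal.rpow_mul, ← NNReal.rpow_mul, mul_one_div_cancel h0.ne', NNReal.rpow_one,
    NNReal.rpow_one] at h
  have h2 := NNReal.rpow_le_rpow h h0.le
  rw [← NNReal.rpow_mul, div_mul_cancel₀ _ h0.ne', NNReal.rpow_one, NNReal.mul_rpow,
    ← NNReal.rpow_mul, sub_mul, one_div_mul_cancel h0.ne', one_mul] at h2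
  exact h2

lemma aux_concave_nn' {θ : ℝ} (h0 : 0 ≤ θ) (h1 : θ ≤ 1) {x y : ℝ} (hx : 0 ≤ x) (hy : 0 ≤ y) :
    (x + y) ^ θ ≤ x ^ θ + y ^ θ := by
  have h := NNReal.rpow_add_le_add_rpow x.toNNReal y.toNNReal h0 h1
  rw [← NNReal.coe_le_coe] at h
  push_cast at h
  rwa [Real.coe_toNNReal x hx, Real.coe_toNNReal y hy] at h

lemma aux_add' {θ : ℝ} (h0 : 0 < θ) (h1 : θ ≤ 1) {x y : ℝ} (hx : 0 ≤ x) (hy : 0 ≤ y) :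
    x ^ θ + y ^ θ ≤ 2 ^ (1 - θ) * (x + y) ^ θ := by
  have h := aux_add_nn h0 h1 x.toNNReal y.toNNReal
  rw [← NNReal.coe_le_coe] at h
  push_cast at h
  rwa [Real.coe_toNNReal x hx, Real.coe_toNNReal y hy] at h

lemma aux_sub' {θ : ℝ} (h0 : 0 < θ) (h1 : θ ≤ 1) {a b : ℝ} (hb : 0 ≤ b) (hba : b ≤ a) :
    a ^ θ - b ^ θ ≤ (a - b) ^ θ := by
  have h := aux_concave_nn' h0.le h1 (sub_nonneg.2 hba) hb
  rw [sub_add_cancel] at h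
  linarith

lemma msign {θ : ℝ} (h0 : 0 < θ) {a : ℝ} (ha : 0 ≤ a) : |a| ^ θ * Real.sign a = a ^ θ := by
  rcases ha.eq_or_lt with h | h
  · simp [← h, Real.sign_zero, Real.zero_rpow h0.ne']
  · rw [abs_of_pos h, Real.sign_of_pos h, mul_one]

lemma key1 {θ : ℝ} (h0 : 0 < θ) (h1 : θ ≤ 1) {a b : ℝ} (hb : 0 ≤ b) (hba : b ≤ a) :
    |a ^ θ - b ^ θ| ≤ |a - b| ^ θ := by
  rw [abs_of_nonneg (sub_nonneg.2 (Real.rpow_le_rpow hb hba h0.le)),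
    abs_of_nonneg (sub_nonneg.2 hba)]
  exact aux_sub' h0 h1 hb hba

lemma key {θ : ℝ} (h0 : 0 < θ) (h1 : θ ≤ 1) (a b : ℝ) :
    abs (|a| ^ θ * Real.sign a - |b| ^ θ * Real.sign b) ≤ 2 ^ (1 - θ) * |a - b| ^ θ := by
  have hone : (1 : ℝ) ≤ 2 ^ (1 - θ) := by
    calc (1:ℝ) = 2 ^ (0:ℝ) := by simp
    _ ≤ 2 ^ (1 - θ) := Real.rpow_le_rpow_of_exponent_le one_le_two (by linarith)
  have key_pair : ∀ a b : ℝ, 0 ≤ a →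
      abs (|a| ^ θ * Real.sign a - |b| ^ θ * Real.sign b) ≤ 2 ^ (1 - θ) * |a - b| ^ θ := by
    intro a b ha
    rcases le_or_gt 0 b with hb | hb
    · rw [msign h0 ha, msign h0 hb]
      have h2 : |a ^ θ - b ^ θ| ≤ |a - b| ^ θ := by
        rcases le_total b a with h | h
        · exact key1 h0 h1 hb h
        · rw [abs_sub_comm, abs_sub_comm a b]; exact key1 h0 h1 ha h
      calc |a ^ θ - b ^ θ| ≤ |a - b| ^ θ := h2
      _ ≤ 2 ^ (1 - θ) * |a - b| ^ θ :=
        le_mul_of_one_le_left (Real.rpow_nonneg (abs_nonneg _) _) hone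
    · rw [msign h0 ha, abs_of_neg hb, Real.sign_of_neg hb, mul_neg_one, sub_neg_eq_add,
        abs_of_nonneg (add_nonneg (Real.rpow_nonneg ha θ) (Real.rpow_nonneg (by linarith) θ)),
        abs_of_nonneg (by linarith : (0:ℝ) ≤ a - b),
        sub_eq_add_neg]
      exact aux_add' h0 h1 ha (by linarith)
  rcases le_or_gt 0 a with ha | ha
  · exact key_pair a b ha
  · have h := key_pair (-a) (-b) (by linarith)
    rw [abs_neg, abs_neg, Real.sign_neg, Real.sign_neg] at h
    have e1 : |a| ^ θ * -Real.sign a - |b| ^ θ * -Real.sign b =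
        -(|a| ^ θ * Real.sign a - |b| ^ θ * Real.sign b) := by ring
    have e2 : -a - -b = -(a - b) := by ring
    rwa [e1, e2, abs_neg, abs_neg] at h

/-- The `ℓ_q` norm of a real sequence (as an explicit formula). -/
noncomputable def lpNorm (q : ℝ) (x : ℕ → ℝ) : ℝ := (∑' j, |x j| ^ q) ^ (1 / q)

/-- The coordinatewise Mazur map `M_q(x)_j = |x_j|^{2/q}·sign(x_j)`. -/
noncomputable def mazur (q : ℝ) (x : ℕ → ℝ) : ℕ → ℝ :=
  fun j => |x j| ^ (2 / q) * Real.sign (x j)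

/-- For `p ≥ 2` and `x, y ∈ ℓ₂`,
`‖M_p(x) − M_p(y)‖_p ≤ 2^{1−2/p}·‖x−y‖₂^{2/p} ≤ 2·‖x−y‖₂^{2/p}`. -/
theorem stmt3 (p : ℝ) (hp : 2 ≤ p) (x y : lp (fun _ : ℕ => ℝ) 2) :
    lpNorm p (mazur p x - mazur p y) ≤ (2 : ℝ) ^ (1 - 2 / p) * ‖x - y‖ ^ (2 / p) ∧
    (2 : ℝ) ^ (1 - 2 / p) * ‖x - y‖ ^ (2 / p) ≤ 2 * ‖x - y‖ ^ (2 / p) := by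
  have hp0 : (0:ℝ) < p := by linarith
  have hθ0 : (0:ℝ) < 2 / p := by positivity
  have hθ1 : 2 / p ≤ 1 := by rw [div_le_one hp0]; linarith
  have htoReal : ((2 : ENNReal)).toReal = (2 : ℝ) := by norm_num
  have h2pos : (0:ℝ) < ((2 : ENNReal)).toReal := by rw [htoReal]; norm_num
  have hco : ∀ j, (x - y) j = x j - y j := fun j => by
    rw [lp.coeFn_sub]; rfl
  -- pointwise bound
  have hpt : ∀ j, |(mazur p x - mazur p y) j| ^ p ≤
      2 ^ (p - 2) * ‖(x - y) j‖ ^ (2:ℝ) := by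
    intro j
    have hk := key hθ0 hθ1 (x j) (y j)
    have h := Real.rpow_le_rpow (abs_nonneg _) hk hp0.le
    have hrhs : (2 ^ (1 - 2/p) * |x j - y j| ^ (2/p)) ^ p
        = 2 ^ (p - 2) * |x j - y j| ^ (2:ℝ) := by
      rw [Real.mul_rpow (Real.rpow_nonneg (by norm_num) _)
        (Real.rpow_nonneg (abs_nonneg _) _),
        ← Real.rpow_mul (by norm_num : (0:ℝ) ≤ 2), ← Real.rpow_mul (abs_nonneg _),
        show (1 - 2/p) * p = p - 2 by field_simp,
        show 2/p * p = 2 by field_simp]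
    rw [hrhs] at h
    have hmz : (mazur p x - mazur p y) j
        = |x j| ^ (2/p) * Real.sign (x j) - |y j| ^ (2/p) * Real.sign (y j) := rfl
    rw [hmz, hco j, Real.norm_eq_abs]
    exact h
  have hs2 : Summable fun j => ‖(x - y) j‖ ^ ((2:ENNReal)).toReal :=
    (lp.memℓp (x - y)).summable h2pos
  rw [htoReal] at hs2
  have hgs : Summable fun j => |(mazur p x - mazur p y) j| ^ p := by
    refine Summable.of_nonneg_of_le (fun j => Real.rpow_nonneg (abs_nonneg _) p) hpt ?_
    exact hs2.mul_left _
  have hnorm2 : ‖x - y‖ ^ (2:ℝ) = ∑' j, ‖(x - y) j‖ ^ (2:ℝ) := by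
    have := lp.norm_rpow_eq_tsum h2pos (x - y)
    rwa [htoReal] at this
  have hT : (∑' j, |(mazur p x - mazur p y) j| ^ p)
      ≤ 2 ^ (p - 2) * ‖x - y‖ ^ (2:ℝ) := by
    calc (∑' j, |(mazur p x - mazur p y) j| ^ p)
        ≤ ∑' j, 2 ^ (p - 2) * ‖(x - y) j‖ ^ (2:ℝ) :=
          Summable.tsum_le_tsum hpt hgs (hs2.mul_left _)
      _ = 2 ^ (p - 2) * ∑' j, ‖(x - y) j‖ ^ (2:ℝ) := tsum_mul_left
      _ = 2 ^ (p - 2) * ‖x - y‖ ^ (2:ℝ) := by rw [hnorm2]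
  constructor
  · have h1 : lpNorm p (mazur p x - mazur p y)
        ≤ (2 ^ (p - 2) * ‖x - y‖ ^ (2:ℝ)) ^ (1/p) := by
      rw [lpNorm]
      exact Real.rpow_le_rpow
        (tsum_nonneg fun j => Real.rpow_nonneg (abs_nonneg _) p) hT (by positivity)
    calc lpNorm p (mazur p x - mazur p y)
        ≤ (2 ^ (p - 2) * ‖x - y‖ ^ (2:ℝ)) ^ (1/p) := h1
      _ = (2:ℝ) ^ (1 - 2/p) * ‖x - y‖ ^ (2/p) := by
        rw [Real.mul_rpow (Real.rpow_nonneg (by norm_num) _)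
          (Real.rpow_nonneg (norm_nonneg _) _),
          ← Real.rpow_mul (by norm_num : (0:ℝ) ≤ 2), ← Real.rpow_mul (norm_nonneg _),
          show (p - 2) * (1/p) = 1 - 2/p by field_simp,
          show (2:ℝ) * (1/p) = 2/p by ring]
  · have : (2:ℝ) ^ (1 - 2/p) ≤ 2 := by
      calc (2:ℝ) ^ (1 - 2/p) ≤ 2 ^ (1:ℝ) :=
        Real.rpow_le_rpow_of_exponent_le one_le_two (by linarith)
      _ = 2 := Real.rpow_one 2
    exact mul_le_mul_of_nonneg_right this (Real.rpow_nonneg (norm_nonneg _) _)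
end

section
/- For every real p ≥ 2, the Mazur map M_p : ℓ₂ → ℓ_p is (2/p)-Hölder with constant 2, and in particular uniformly continuous. -/
open scoped ENNReal

lemma real_rpow_add_le {a b α : ℝ} (ha : 0 ≤ a) (hb : 0 ≤ b) (h0 : 0 ≤ α) (h1 : α ≤ 1) :
    (a + b) ^ α ≤ a ^ α + b ^ α := by
  have h := NNReal.rpow_add_le_add_rpow a.toNNReal b.toNNReal h0 h1
  have h' := NNReal.coe_le_coe.2 h
  push_cast [NNReal.coe_rpow, Real.coe_toNNReal _ ha, Real.coe_toNNReal _ hb,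
    Real.coe_toNNReal _ (add_nonneg ha hb)] at h'
  simpa using h'

lemma sub_rpow_abs {a b α : ℝ} (ha : 0 ≤ a) (hb : 0 ≤ b) (h0 : 0 ≤ α) (h1 : α ≤ 1) :
    |a ^ α - b ^ α| ≤ |a - b| ^ α := by
  wlog hba : b ≤ a generalizing a b
  · rw [abs_sub_comm, abs_sub_comm a b]; exact this hb ha (le_of_not_ge hba)
  have h1' : a ^ α - b ^ α ≤ (a - b) ^ α := by
    have := real_rpow_add_le (sub_nonneg.2 hba) hb h0 h1
    rw [sub_add_cancel] at this
    linarith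
  have h2 : 0 ≤ a ^ α - b ^ α := sub_nonneg.2 (Real.rpow_le_rpow hb hba h0)
  rw [abs_of_nonneg h2, abs_of_nonneg (sub_nonneg.2 hba)]
  exact h1'

/-- `f a = |a|^α * sign a` for `a ≥ 0` equals `a ^ α`. -/
lemma sign_rpow_of_nonneg {a α : ℝ} (ha : 0 ≤ a) (h0 : 0 < α) :
    |a| ^ α * Real.sign a = a ^ α := by
  rcases eq_or_lt_of_le ha with h | h
  · simp [← h, Real.zero_rpow h0.ne']
  · rw [abs_of_pos h, Real.sign_of_pos h, mul_one]

lemma sign_rpow_of_nonpos {a α : ℝ} (ha : a ≤ 0) (h0 : 0 < α) :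
    |a| ^ α * Real.sign a = -((-a) ^ α) := by
  rcases eq_or_lt_of_le ha with h | h
  · simp [h, Real.zero_rpow h0.ne']
  · rw [abs_of_neg h, Real.sign_of_neg h, mul_neg_one]

/-- Key pointwise estimate for the Mazur map. -/
lemma mazur_pointwise {α : ℝ} (h0 : 0 < α) (h1 : α ≤ 1) (a b : ℝ) :
    |(|a| ^ α * Real.sign a - |b| ^ α * Real.sign b)| ≤ 2 * |a - b| ^ α := by
  have habs : ∀ c d : ℝ, 0 ≤ c → d ≤ 0 →
      |(|c| ^ α * Real.sign c - |d| ^ α * Real.sign d)| ≤ 2 * |c - d| ^ α := by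
    intro c d hc hd
    rw [sign_rpow_of_nonneg hc h0, sign_rpow_of_nonpos hd h0, sub_neg_eq_add]
    have hcd : 0 ≤ c - d := by linarith
    have hc' : c ^ α ≤ (c - d) ^ α := Real.rpow_le_rpow hc (by linarith) h0.le
    have hd' : (-d) ^ α ≤ (c - d) ^ α := Real.rpow_le_rpow (by linarith) (by linarith) h0.le
    have hnn : 0 ≤ c ^ α + (-d) ^ α :=
      add_nonneg (Real.rpow_nonneg hc _) (Real.rpow_nonneg (by linarith) _)
    rw [abs_of_nonneg hnn, abs_of_nonneg hcd]
    linarith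
  rcases le_total 0 a with ha | ha <;> rcases le_total 0 b with hb | hb
  · rw [sign_rpow_of_nonneg ha h0, sign_rpow_of_nonneg hb h0]
    have := sub_rpow_abs ha hb h0.le h1
    nlinarith [Real.rpow_nonneg (abs_nonneg (a - b)) α]
  · exact habs a b ha hb
  · rw [abs_sub_comm, abs_sub_comm a b]; exact habs b a hb ha
  · rw [sign_rpow_of_nonpos ha h0, sign_rpow_of_nonpos hb h0]
    have := sub_rpow_abs (neg_nonneg.2 hb) (neg_nonneg.2 ha) h0.le h1
    rw [show -b - -a = a - b by ring] at this
    rw [show -((-a) ^ α) - -((-b) ^ α) = ((-b) ^ α - (-a) ^ α) by ring]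
    nlinarith [Real.rpow_nonneg (abs_nonneg (a - b)) α]

/-- For `p ≥ 2` the Mazur map `M_p : ℓ₂ → ℓ_p` is `(2/p)`-Hölder with constant `2`,
and in particular uniformly continuous. -/
theorem stmt4 (p : ℝ) (hp : 2 ≤ p) :
    (∀ x y : lp (fun _ : ℕ => ℝ) 2,
      lpNorm p (mazur p x - mazur p y) ≤ 2 * ‖x - y‖ ^ (2 / p)) ∧
    ∀ ε > (0 : ℝ), ∃ δ > (0 : ℝ), ∀ x y : lp (fun _ : ℕ => ℝ) 2,
      ‖x - y‖ < δ → lpNorm p (mazur p x - mazur p y) < ε := by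
  have hp0 : 0 < p := by linarith
  have hα0 : 0 < 2 / p := by positivity
  have hα1 : 2 / p ≤ 1 := by rw [div_le_one hp0]; linarith
  have main : ∀ x y : lp (fun _ : ℕ => ℝ) 2,
      lpNorm p (mazur p x - mazur p y) ≤ 2 * ‖x - y‖ ^ (2 / p) := by
    intro x y
    set α := 2 / p with hα
    -- summability of |x j - y j| ^ 2
    have hmem : Memℓp (fun j => (x : ℕ → ℝ) j - (y : ℕ → ℝ) j) 2 := by
      have := lp.memℓp (x - y)
      rw [lp.coeFn_sub] at this; exact this
    have hsum2 : Summable (fun j => |(x : ℕ → ℝ) j - (y : ℕ → ℝ) j| ^ (2 : ℝ)) := by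
      have := hmem.summable (by norm_num : (0:ℝ) < (2 : ℝ≥0∞).toReal)
      simpa [Real.norm_eq_abs] using this
    set S := ∑' j, |(x : ℕ → ℝ) j - (y : ℕ → ℝ) j| ^ (2 : ℝ) with hS
    have hS0 : 0 ≤ S := tsum_nonneg fun j => Real.rpow_nonneg (abs_nonneg _) _
    -- pointwise bound raised to power p
    have hpt : ∀ j, |(mazur p x - mazur p y) j| ^ p ≤
        2 ^ p * |(x : ℕ → ℝ) j - (y : ℕ → ℝ) j| ^ (2 : ℝ) := by
      intro j
      have h1 : |(mazur p x - mazur p y) j| ≤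
          2 * |(x : ℕ → ℝ) j - (y : ℕ → ℝ) j| ^ α := by
        simpa [mazur, Pi.sub_apply] using
          mazur_pointwise hα0 hα1 ((x : ℕ → ℝ) j) ((y : ℕ → ℝ) j)
      have h2 := Real.rpow_le_rpow (abs_nonneg _) h1 hp0.le
      calc |(mazur p x - mazur p y) j| ^ p
          ≤ (2 * |(x : ℕ → ℝ) j - (y : ℕ → ℝ) j| ^ α) ^ p := h2
        _ = 2 ^ p * |(x : ℕ → ℝ) j - (y : ℕ → ℝ) j| ^ (2 : ℝ) := by
            rw [Real.mul_rpow (by norm_num) (Real.rpow_nonneg (abs_nonneg _) _),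
              ← Real.rpow_mul (abs_nonneg _)]
            congr 1
            rw [hα]; field_simp
    -- sum up
    have hsum1 : Summable (fun j => |(mazur p x - mazur p y) j| ^ p) :=
      Summable.of_nonneg_of_le (fun j => Real.rpow_nonneg (abs_nonneg _) _) hpt
        (hsum2.mul_left _)
    have htsum : ∑' j, |(mazur p x - mazur p y) j| ^ p ≤ 2 ^ p * S := by
      calc ∑' j, |(mazur p x - mazur p y) j| ^ p
          ≤ ∑' j, 2 ^ p * |(x : ℕ → ℝ) j - (y : ℕ → ℝ) j| ^ (2 : ℝ) :=
            Summable.tsum_le_tsum hpt hsum1 (hsum2.mul_left _)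
        _ = 2 ^ p * S := tsum_mul_left
    -- norm formula
    have hnorm : ‖x - y‖ = S ^ (1 / (2:ℝ)) := by
      have := lp.norm_eq_tsum_rpow (by norm_num : 0 < (2 : ℝ≥0∞).toReal) (x - y)
      simpa [Real.norm_eq_abs, lp.coeFn_sub, Pi.sub_apply, hS] using this
    have hT0 : 0 ≤ ∑' j, |(mazur p x - mazur p y) j| ^ p :=
      tsum_nonneg fun j => Real.rpow_nonneg (abs_nonneg _) _
    rw [lpNorm, hnorm]
    calc (∑' j, |(mazur p x - mazur p y) j| ^ p) ^ (1 / p)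
        ≤ (2 ^ p * S) ^ (1 / p) :=
          Real.rpow_le_rpow hT0 htsum (by positivity)
      _ = 2 * S ^ (1 / p) := by
          rw [Real.mul_rpow (by positivity) hS0,
            ← Real.rpow_mul (by norm_num : (0:ℝ) ≤ 2), mul_one_div,
            div_self hp0.ne', Real.rpow_one]
      _ = 2 * (S ^ (1 / (2:ℝ))) ^ α := by
          rw [← Real.rpow_mul hS0, hα]
          congr 2
          field_simp
  refine ⟨main, fun ε hε => ?_⟩
  refine ⟨(ε / 2) ^ (p / 2), Real.rpow_pos_of_pos (by linarith) _, fun x y hxy => ?_⟩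
  have h1 := main x y
  have h2 : ‖x - y‖ ^ (2 / p) < ((ε / 2) ^ (p / 2)) ^ (2 / p) :=
    Real.rpow_lt_rpow (norm_nonneg _) hxy hα0
  rw [← Real.rpow_mul (by linarith : (0:ℝ) ≤ ε / 2)] at h2
  have hpe : p / 2 * (2 / p) = 1 := by field_simp
  rw [hpe, Real.rpow_one] at h2
  linarith
end

section
/- If M is a 1-net of ℓ₂ (i.e., a 1-separated subset such that every point of ℓ₂ is within distance 1 of M), then for p ≥ 2 the restriction of the Mazur map M_p to M is 2-Lipschitz. -/
/-- Real subadditivity of `rpow` for exponents in `[0,1]`. -/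
lemma rpow_add_le_add_rpow_real {θ a b : ℝ} (hθ0 : 0 ≤ θ) (hθ1 : θ ≤ 1)
    (ha : 0 ≤ a) (hb : 0 ≤ b) : (a + b) ^ θ ≤ a ^ θ + b ^ θ := by
  lift a to NNReal using ha
  lift b to NNReal using hb
  have := NNReal.rpow_add_le_add_rpow a b hθ0 hθ1
  exact_mod_cast this

lemma rpow_sub_rpow_le {θ a b : ℝ} (hθ0 : 0 ≤ θ) (hθ1 : θ ≤ 1)
    (hb : 0 ≤ b) (hba : b ≤ a) : a ^ θ - b ^ θ ≤ (a - b) ^ θ := by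
  have h : a ^ θ ≤ (a - b) ^ θ + b ^ θ := by
    have := rpow_add_le_add_rpow_real hθ0 hθ1 (sub_nonneg.2 hba) hb
    simpa [sub_add_cancel] using this
  linarith

/-- absolute value of the signed power -/
lemma abs_sign_rpow {θ : ℝ} (hθ : θ ≠ 0) (a : ℝ) :
    abs (|a| ^ θ * Real.sign a) = |a| ^ θ := by
  rcases lt_trichotomy a 0 with h | h | h
  · rw [Real.sign_of_neg h]
    rw [abs_mul]
    simp [abs_of_nonneg (Real.rpow_nonneg (abs_nonneg a) θ)]
  · simp [h, Real.zero_rpow hθ]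
  · rw [Real.sign_of_pos h]
    simp [abs_of_nonneg (Real.rpow_nonneg (abs_nonneg a) θ)]

lemma sign_rpow_nonneg {θ : ℝ} (hθ : θ ≠ 0) {a : ℝ} (ha : 0 ≤ a) :
    |a| ^ θ * Real.sign a = a ^ θ := by
  rcases eq_or_lt_of_le ha with h | h
  · simp [← h, Real.zero_rpow hθ]
  · rw [Real.sign_of_pos h, abs_of_pos h, mul_one]

lemma sign_rpow_neg {θ : ℝ} (a : ℝ) :
    |(-a)| ^ θ * Real.sign (-a) = -(|a| ^ θ * Real.sign a) := by
  rw [abs_neg, Real.sign_neg, mul_neg]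

/-- key pointwise estimate for both `a b` nonneg -/
lemma key_nonneg {θ : ℝ} (hθ0 : 0 < θ) (hθ1 : θ ≤ 1) {a b : ℝ}
    (ha : 0 ≤ a) (hb : 0 ≤ b) :
    abs (|a| ^ θ * Real.sign a - |b| ^ θ * Real.sign b) ≤ 2 * |a - b| ^ θ := by
  rw [sign_rpow_nonneg hθ0.ne' ha, sign_rpow_nonneg hθ0.ne' hb]
  have h2 : (0:ℝ) ≤ |a - b| ^ θ := Real.rpow_nonneg (abs_nonneg _) _
  have key : ∀ u v : ℝ, 0 ≤ v → v ≤ u → u ^ θ - v ^ θ ≤ |u - v| ^ θ := by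
    intro u v hv huv
    rw [abs_of_nonneg (sub_nonneg.2 huv)]
    exact rpow_sub_rpow_le hθ0.le hθ1 hv huv
  rcases le_total b a with h | h
  · rw [abs_of_nonneg (sub_nonneg.2 (Real.rpow_le_rpow hb h hθ0.le))]
    calc a ^ θ - b ^ θ ≤ |a - b| ^ θ := key a b hb h
    _ ≤ 2 * |a - b| ^ θ := by linarith
  · rw [abs_of_nonpos (sub_nonpos.2 (Real.rpow_le_rpow ha h hθ0.le)), neg_sub]
    calc b ^ θ - a ^ θ ≤ |b - a| ^ θ := key b a ha h
    _ = |a - b| ^ θ := by rw [abs_sub_comm]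
    _ ≤ 2 * |a - b| ^ θ := by linarith

/-- key pointwise estimate, mixed signs, a ≥ 0 ≥ b -/
lemma key_mixed {θ : ℝ} (hθ0 : 0 < θ) {a b : ℝ} (ha : 0 ≤ a) (hb : b ≤ 0) :
    abs (|a| ^ θ * Real.sign a - |b| ^ θ * Real.sign b) ≤ 2 * |a - b| ^ θ := by
  have hab : |a - b| = |a| + |b| := by
    rw [abs_of_nonneg ha, abs_of_nonpos hb]
    rw [abs_of_nonneg (by linarith)]; ring
  have h1 : |a| ^ θ ≤ |a - b| ^ θ := by
    apply Real.rpow_le_rpow (abs_nonneg _) _ hθ0.le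
    rw [hab]; linarith [abs_nonneg b]
  have h2 : |b| ^ θ ≤ |a - b| ^ θ := by
    apply Real.rpow_le_rpow (abs_nonneg _) _ hθ0.le
    rw [hab]; linarith [abs_nonneg a]
  calc abs (|a| ^ θ * Real.sign a - |b| ^ θ * Real.sign b)
      ≤ abs (|a| ^ θ * Real.sign a) + abs (|b| ^ θ * Real.sign b) := abs_sub _ _
    _ = |a| ^ θ + |b| ^ θ := by
        rw [abs_sign_rpow hθ0.ne', abs_sign_rpow hθ0.ne']
    _ ≤ 2 * |a - b| ^ θ := by linarith

/-- key pointwise estimate in general -/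
lemma key_pointwise {θ : ℝ} (hθ0 : 0 < θ) (hθ1 : θ ≤ 1) (a b : ℝ) :
    abs (|a| ^ θ * Real.sign a - |b| ^ θ * Real.sign b) ≤ 2 * |a - b| ^ θ := by
  rcases le_total 0 a with ha | ha <;> rcases le_total 0 b with hb | hb
  · exact key_nonneg hθ0 hθ1 ha hb
  · exact key_mixed hθ0 ha hb
  · have h := key_mixed hθ0 hb ha
    rw [abs_sub_comm, abs_sub_comm b a] at h
    exact h
  · have := key_nonneg hθ0 hθ1 (neg_nonneg.2 ha) (neg_nonneg.2 hb)
    rw [sign_rpow_neg, sign_rpow_neg] at this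
    have heq : |-a - -b| = |a - b| := by rw [← abs_neg]; ring_nf
    rw [heq] at this
    rw [show -(|a| ^ θ * Real.sign a) - -(|b| ^ θ * Real.sign b)
        = -((|a| ^ θ * Real.sign a) - (|b| ^ θ * Real.sign b)) by ring, abs_neg] at this
    exact this

/-- If `M` is a `1`-net of `ℓ₂` then for `p ≥ 2` the restriction of the Mazur map
`M_p` to `M` is `2`-Lipschitz. -/
theorem stmt5 (p : ℝ) (hp : 2 ≤ p) (M : Set (lp (fun _ : ℕ => ℝ) 2))
    (hsep : ∀ x ∈ M, ∀ y ∈ M, x ≠ y → 1 ≤ ‖x - y‖)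
    (hcov : ∀ x : lp (fun _ : ℕ => ℝ) 2, ∃ y ∈ M, ‖x - y‖ ≤ 1) :
    ∀ x ∈ M, ∀ y ∈ M, lpNorm p (mazur p x - mazur p y) ≤ 2 * ‖x - y‖ := by
  intro x hx y hy
  have hp0 : (0:ℝ) < p := by linarith
  by_cases hxy : x = y
  · subst hxy
    have : mazur p x - mazur p x = 0 := by simp
    rw [this]
    simp only [lpNorm, Pi.zero_apply, abs_zero, Real.zero_rpow hp0.ne', tsum_zero,
      sub_self, norm_zero, mul_zero]
    rw [Real.zero_rpow (by positivity : (1:ℝ)/p ≠ 0)]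
  · have h1 : 1 ≤ ‖x - y‖ := hsep x hx y hy hxy
    set θ : ℝ := 2 / p with hθ
    have hθ0 : 0 < θ := by positivity
    have hθ1 : θ ≤ 1 := by
      rw [hθ, div_le_one hp0]; exact hp
    set d : ℕ → ℝ := fun j => x j - y j with hd
    -- coordinates of x - y
    have hcoe : ∀ j, ((x - y : lp (fun _ : ℕ => ℝ) 2) : ∀ _ : ℕ, ℝ) j = d j := by
      intro j; simp [hd]
    -- pointwise estimate, p-th power
    have hpoint : ∀ j, |(mazur p x - mazur p y) j| ^ p ≤ 2 ^ p * |d j| ^ (2:ℝ) := by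
      intro j
      have h := key_pointwise hθ0 hθ1 (x j) (y j)
      have hle : |(mazur p x - mazur p y) j| ^ p ≤ (2 * |d j| ^ θ) ^ p := by
        apply Real.rpow_le_rpow (abs_nonneg _) _ hp0.le
        simpa [mazur, hd] using h
      refine hle.trans_eq ?_
      rw [Real.mul_rpow (by norm_num) (Real.rpow_nonneg (abs_nonneg _) _),
        ← Real.rpow_mul (abs_nonneg _)]
      congr 1
      rw [hθ]
      field_simp
    -- summability of the square norm series
    have hmem := lp.memℓp (x - y)
    have hsum2 : Summable fun j => |d j| ^ (2:ℝ) := by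
      have h := hmem.summable (by norm_num : 0 < (2:ENNReal).toReal)
      have he : ∀ j : ℕ, ‖((x - y : lp (fun _ : ℕ => ℝ) 2) : ∀ _ : ℕ, ℝ) j‖ ^ (2:ENNReal).toReal = |d j| ^ (2:ℝ) := by
        intro j; rw [hcoe j, Real.norm_eq_abs]; norm_num
      exact (summable_congr he).mp h
    have hsum2' : Summable fun j => 2 ^ p * |d j| ^ (2:ℝ) := hsum2.mul_left _
    have hsumL : Summable fun j => |(mazur p x - mazur p y) j| ^ p :=
      Summable.of_nonneg_of_le (fun j => Real.rpow_nonneg (abs_nonneg _) _) hpoint hsum2'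
    -- sum inequality
    have htsum : (∑' j, |(mazur p x - mazur p y) j| ^ p)
        ≤ 2 ^ p * ∑' j, |d j| ^ (2:ℝ) := by
      rw [← tsum_mul_left]
      exact Summable.tsum_le_tsum hpoint hsumL hsum2'
    -- the norm of x - y
    have hnorm : ‖x - y‖ = (∑' j, |d j| ^ (2:ℝ)) ^ ((1:ℝ)/2) := by
      rw [lp.norm_eq_tsum_rpow (by norm_num) (x - y)]
      simp [hcoe, Real.norm_eq_abs, ENNReal.toReal_ofNat]
    have hS : (0:ℝ) ≤ ∑' j, |d j| ^ (2:ℝ) :=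
      tsum_nonneg fun j => Real.rpow_nonneg (abs_nonneg _) _
    -- putting things together
    have hnn : (0:ℝ) ≤ ∑' j, |(mazur p x - mazur p y) j| ^ p :=
      tsum_nonneg fun j => Real.rpow_nonneg (abs_nonneg _) _
    calc lpNorm p (mazur p x - mazur p y)
        = (∑' j, |(mazur p x - mazur p y) j| ^ p) ^ ((1:ℝ)/p) := rfl
      _ ≤ (2 ^ p * ∑' j, |d j| ^ (2:ℝ)) ^ ((1:ℝ)/p) :=
          Real.rpow_le_rpow hnn htsum (by positivity)
      _ = 2 * (∑' j, |d j| ^ (2:ℝ)) ^ ((1:ℝ)/p) := by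
          rw [Real.mul_rpow (by positivity) hS,
            ← Real.rpow_mul (by norm_num : (0:ℝ) ≤ 2), mul_one_div, div_self hp0.ne',
            Real.rpow_one]
      _ = 2 * ‖x - y‖ ^ θ := by
          rw [hnorm, ← Real.rpow_mul hS]
          congr 1
          rw [hθ]; congr 1; field_simp
      _ ≤ 2 * ‖x - y‖ := by
          have : ‖x - y‖ ^ θ ≤ ‖x - y‖ ^ (1:ℝ) :=
            Real.rpow_le_rpow_of_exponent_le h1 hθ1
          rw [Real.rpow_one] at this
          linarith
end

section
/- Let ω : (0,∞) → [0,∞) be nondecreasing and D ≥ 0 a constant. Suppose that for every real p ≥ 2, every positive integer k, and every t > 0 we have t^{2/p}·(2k)^{1/p} ≤ k^{1/p}·ω(√2·t) + D. Then liminf_{s→0⁺} ω(s) ≥ 1/(2e); in particular ω(s) does not tend to 0 as s → 0. -/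
open Filter in
/-- If `ω : (0,∞) → [0,∞)` is nondecreasing, `D ≥ 0`, and for every real `p ≥ 2`, every
positive integer `k` and every `t > 0` one has
`t^{2/p}·(2k)^{1/p} ≤ k^{1/p}·ω(√2·t) + D`, then `liminf_{s→0⁺} ω(s) ≥ 1/(2e)`;
in particular `ω(s)` does not tend to `0` as `s → 0⁺`. -/
theorem stmt15 (ω : ℝ → ℝ) (hω : ∀ s, 0 < s → 0 ≤ ω s)
    (hmono : ∀ s u : ℝ, 0 < s → s ≤ u → ω s ≤ ω u) (D : ℝ) (hD : 0 ≤ D)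
    (h : ∀ (p : ℝ) (k : ℕ) (t : ℝ), 2 ≤ p → 1 ≤ k → 0 < t →
      t ^ (2 / p) * ((2 * k : ℕ) : ℝ) ^ (1 / p) ≤ (k : ℝ) ^ (1 / p) * ω (Real.sqrt 2 * t) + D) :
    1 / (2 * Real.exp 1) ≤ Filter.liminf ω (nhdsWithin 0 (Set.Ioi 0)) ∧
    ¬ Filter.Tendsto ω (nhdsWithin 0 (Set.Ioi 0)) (nhds 0) := by
  have hs2 : (0:ℝ) < Real.sqrt 2 := Real.sqrt_pos.mpr two_pos
  -- Step 1: for every p ≥ 2 and s > 0, (s^2)^(1/p) ≤ ω s.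
  have key : ∀ (p : ℝ) (s : ℝ), 2 ≤ p → 0 < s → (s ^ 2) ^ (1 / p) ≤ ω s := by
    intro p s hp hs
    have hp0 : 0 < p := lt_of_lt_of_le two_pos hp
    by_contra hc
    push_neg at hc
    set ε : ℝ := (s ^ 2) ^ (1 / p) - ω s with hε
    have hεpos : 0 < ε := by simp only [hε]; linarith
    obtain ⟨k, hk⟩ : ∃ k : ℕ, (D / ε) ^ p < k := exists_nat_gt _
    have ht : 0 < s / Real.sqrt 2 := div_pos hs hs2
    have hhyp := h p (k+1) (s / Real.sqrt 2) hp (Nat.le_add_left 1 k) ht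
    have hst : Real.sqrt 2 * (s / Real.sqrt 2) = s := by field_simp
    rw [hst] at hhyp
    have hL : (s / Real.sqrt 2) ^ (2 / p) * ((2 * (k+1) : ℕ) : ℝ) ^ (1 / p)
        = ((k+1 : ℕ) : ℝ) ^ (1 / p) * (s ^ 2) ^ (1 / p) := by
      have h1 : (s / Real.sqrt 2) ^ (2 / p) = (s ^ 2 / 2) ^ (1/p) := by
        have : s ^ 2 / 2 = (s / Real.sqrt 2) ^ (2:ℕ) := by
          rw [div_pow, Real.sq_sqrt (by norm_num : (0:ℝ) ≤ 2)]
        rw [this, ← Real.rpow_natCast (s / Real.sqrt 2) 2, ← Real.rpow_mul ht.le]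
        norm_num [div_eq_mul_inv]
      rw [h1, ← Real.mul_rpow (by positivity) (by positivity)]
      rw [← Real.mul_rpow (by positivity) (by positivity)]
      congr 1
      push_cast
      ring
    rw [hL] at hhyp
    -- so (k+1)^(1/p) * ε ≤ D
    have hkp : ((k+1 : ℕ) : ℝ) ^ (1 / p) * ε ≤ D := by
      simp only [hε]; nlinarith [hhyp]
    have hgt : D / ε < ((k+1 : ℕ) : ℝ) ^ (1 / p) := by
      have h0 : (0:ℝ) ≤ (D / ε) ^ p := by positivity
      have hlt : (D / ε) ^ p < ((k+1 : ℕ) : ℝ) := by push_cast; linarith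
      have := Real.rpow_lt_rpow h0 hlt (by positivity : (0:ℝ) < 1/p)
      rwa [← Real.rpow_mul (by positivity), mul_one_div, div_self hp0.ne',
        Real.rpow_one] at this
    rw [div_lt_iff₀ hεpos] at hgt
    linarith
  -- Step 2: for 0 < s ≤ exp (-1), exp (-1) ≤ ω s
  have key2 : ∀ s : ℝ, 0 < s → s ≤ Real.exp (-1) → Real.exp (-1) ≤ ω s := by
    intro s hs hse
    have hlog : Real.log s ≤ -1 := by
      calc Real.log s ≤ Real.log (Real.exp (-1)) :=
        Real.log_le_log hs hse
      _ = -1 := Real.log_exp _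
    set p : ℝ := -(2 * Real.log s) with hpdef
    have hp2 : 2 ≤ p := by simp only [hpdef]; linarith
    have hp0 : 0 < p := lt_of_lt_of_le two_pos hp2
    have hlogs : Real.log s ≠ 0 := by linarith
    have hcalc : (s ^ 2) ^ (1 / p) = Real.exp (-1) := by
      rw [Real.rpow_def_of_pos (by positivity), Real.log_pow]
      congr 1
      push_cast
      field_simp [hpdef]
      linarith [hpdef]
    calc Real.exp (-1) = (s ^ 2) ^ (1 / p) := hcalc.symm
    _ ≤ ω s := key p s hp2 hs
  -- eventual bound
  have hev : ∀ᶠ s in nhdsWithin (0:ℝ) (Set.Ioi 0), Real.exp (-1) ≤ ω s := by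
    filter_upwards [Ioc_mem_nhdsGT_of_mem
      (by constructor <;> simp [Real.exp_pos] : (0:ℝ) ∈ Set.Ico 0 (Real.exp (-1)))]
      with s hs
    exact key2 s hs.1 hs.2
  have hlt : 1 / (2 * Real.exp 1) < Real.exp (-1) := by
    have he := Real.exp_pos 1
    rw [Real.exp_neg, ← one_div]
    exact one_div_lt_one_div_of_lt he (by linarith)
  constructor
  · have : Real.exp (-1) ≤ Filter.liminf ω (nhdsWithin 0 (Set.Ioi 0)) := by
      apply Filter.le_liminf_of_le
      · apply Filter.IsBoundedUnder.isCoboundedUnder_ge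
        refine ⟨ω 1, ?_⟩
        simp only [Filter.eventually_map]
        filter_upwards [Ioc_mem_nhdsGT_of_mem
          (by constructor <;> norm_num : (0:ℝ) ∈ Set.Ico 0 1)] with s hs
        exact hmono s 1 hs.1 hs.2
      · exact hev
    linarith
  · intro hT
    have := (hT.eventually_lt_const (by positivity : (0:ℝ) < Real.exp (-1))).and hev
    obtain ⟨s, hs1, hs2⟩ := this.exists
    linarith
end
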